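/- Let Γ be the function on the open unit disk defined by Γ(x,y) = (x² + y²)^{1/2} · (−(1/2)·ln(x² + y²))^{−3/2} for 0 < x² + y² < 1 and Γ(0,0) = 0. Consider the piecewise smooth vector field Z* = (X*, Y*) with X*(x,y) = (y, x) and Y*(x,y) = (x + (1/2)Γ(x,y), x + y + (1/2)Γ(x,y)), and its piecewise linear part Z*_L = (X*_L, Y*_L) with X*_L(x,y) = (y, x) and Y*_L(x,y) = (x, x + y). Then Z* belongs to Ω₀, the Jacobian matrices of Y* and Y*_L at the origin coincide, and Z* is NOT locally Σ-equivalent to Z*_L near the origin. -/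

import Mathlib

open Set Filter

noncomputable section

/-- Entry (1,1) of the Jacobian matrix of `X` at the origin. -/
noncomputable def jac11 (X : ℝ × ℝ → ℝ × ℝ) : ℝ := (fderiv ℝ X (0, 0) (1, 0)).1
/-- Entry (1,2) of the Jacobian matrix of `X` at the origin. -/
noncomputable def jac12 (X : ℝ × ℝ → ℝ × ℝ) : ℝ := (fderiv ℝ X (0, 0) (0, 1)).1
/-- Entry (2,1) of the Jacobian matrix of `X` at the origin, i.e. `∂ₓX₂(0,0)`. -/
noncomputable def jac21 (X : ℝ × ℝ → ℝ × ℝ) : ℝ := (fderiv ℝ X (0, 0) (1, 0)).2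
/-- Entry (2,2) of the Jacobian matrix of `X` at the origin. -/
noncomputable def jac22 (X : ℝ × ℝ → ℝ × ℝ) : ℝ := (fderiv ℝ X (0, 0) (0, 1)).2

/-- Determinant of the Jacobian matrix of `X` at the origin. -/
noncomputable def detJ (X : ℝ × ℝ → ℝ × ℝ) : ℝ := jac11 X * jac22 X - jac12 X * jac21 X
/-- Trace of the Jacobian matrix of `X` at the origin. -/
noncomputable def trJ (X : ℝ × ℝ → ℝ × ℝ) : ℝ := jac11 X + jac22 X

/-- The first (complex) eigenvalue of the Jacobian matrix of `X` at the origin. -/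
noncomputable def eig1 (X : ℝ × ℝ → ℝ × ℝ) : ℂ :=
  if 0 ≤ trJ X ^ 2 - 4 * detJ X then
    (((trJ X + Real.sqrt (trJ X ^ 2 - 4 * detJ X)) / 2 : ℝ) : ℂ)
  else
    (((trJ X / 2 : ℝ) : ℂ) + (Real.sqrt (4 * detJ X - trJ X ^ 2) / 2 : ℝ) * Complex.I)

/-- The second (complex) eigenvalue of the Jacobian matrix of `X` at the origin. -/
noncomputable def eig2 (X : ℝ × ℝ → ℝ × ℝ) : ℂ :=
  if 0 ≤ trJ X ^ 2 - 4 * detJ X then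
    (((trJ X - Real.sqrt (trJ X ^ 2 - 4 * detJ X)) / 2 : ℝ) : ℂ)
  else
    (((trJ X / 2 : ℝ) : ℂ) - (Real.sqrt (4 * detJ X - trJ X ^ 2) / 2 : ℝ) * Complex.I)

/-- The quantity ℓ : `Re λ₁⁺/|Im λ₁⁺| + Re λ₁⁻/|Im λ₁⁻|` when both imaginary parts are
nonzero, and `1` otherwise. -/
noncomputable def ellVal (X Y : ℝ × ℝ → ℝ × ℝ) : ℝ :=
  if (eig1 X).im * (eig1 Y).im ≠ 0 then
    (eig1 X).re / |(eig1 X).im| + (eig1 Y).re / |(eig1 Y).im|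
  else 1

/-- Membership in Ω₀ : `Z = (X, Y)` is a piecewise `C¹` vector field on the open set `U`
containing the origin, the origin is a zero of both `X` and `Y`, it is non-degenerate for
both, and `∂ₓX₂(0,0) ⬝ ∂ₓY₂(0,0) > 0`. -/
def InOmega0 (U : Set (ℝ × ℝ)) (X Y : ℝ × ℝ → ℝ × ℝ) : Prop :=
  IsOpen U ∧ (0, 0) ∈ U ∧ ContDiffOn ℝ 1 X U ∧ ContDiffOn ℝ 1 Y U ∧
    X (0, 0) = (0, 0) ∧ Y (0, 0) = (0, 0) ∧ detJ X * detJ Y ≠ 0 ∧ jac21 X * jac21 Y > 0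

/-- Membership in Ω₁ : member of Ω₀ with distinct eigenvalues of each Jacobian matrix
and `ℓ ≠ 0`. -/
def InOmega1 (U : Set (ℝ × ℝ)) (X Y : ℝ × ℝ → ℝ × ℝ) : Prop :=
  InOmega0 U X Y ∧ eig1 X ≠ eig2 X ∧ eig1 Y ≠ eig2 Y ∧ ellVal X Y ≠ 0

/-- `γ` is a solution of `ẋ = X(x)` on the time set `I`. -/
def IsSolutionOn (X : ℝ × ℝ → ℝ × ℝ) (γ : ℝ → ℝ × ℝ) (I : Set ℝ) : Prop :=
  ∀ t ∈ I, HasDerivAt γ (X (γ t)) t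

/-- `H` maps orbit arcs of `X` lying in `S` onto orbit arcs of `X'` lying in `S'`,
preserving the direction of time (via an increasing homeomorphism of time intervals). -/
def MapsOrbits (X X' : ℝ × ℝ → ℝ × ℝ) (H : ℝ × ℝ → ℝ × ℝ) (S S' : Set (ℝ × ℝ)) : Prop :=
  ∀ (γ : ℝ → ℝ × ℝ) (I : Set ℝ), I.OrdConnected → IsSolutionOn X γ I →
    (∀ t ∈ I, γ t ∈ S) →
    ∃ (δ : ℝ → ℝ × ℝ) (J : Set ℝ) (τ : ℝ → ℝ),
      J.OrdConnected ∧ IsSolutionOn X' δ J ∧ (∀ s ∈ J, δ s ∈ S') ∧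
      Set.BijOn τ I J ∧ StrictMonoOn τ I ∧ ContinuousOn τ I ∧
      ∀ t ∈ I, H (γ t) = δ (τ t)

/-- Local Σ-equivalence near the origin between the piecewise smooth vector fields
`Z = (X, Y)` and `Z' = (X', Y')`: a homeomorphism `H` between neighborhoods of the origin
fixing the origin, preserving the switching line `{y = 0}`, and mapping orbit arcs of `X`
(resp. `Y`) in `{y ≥ 0}` (resp. `{y ≤ 0}`) onto orbit arcs of `X'` (resp. `Y'`),
preserving the direction of time, and conversely. -/
def LocalSigmaEquiv (X Y X' Y' : ℝ × ℝ → ℝ × ℝ) : Prop :=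
  ∃ (U₀ V₀ : Set (ℝ × ℝ)) (H Hinv : ℝ × ℝ → ℝ × ℝ),
    U₀ ∈ nhds ((0, 0) : ℝ × ℝ) ∧ V₀ ∈ nhds ((0, 0) : ℝ × ℝ) ∧
    ContinuousOn H U₀ ∧ ContinuousOn Hinv V₀ ∧
    Set.BijOn H U₀ V₀ ∧
    (∀ p ∈ U₀, Hinv (H p) = p) ∧ (∀ q ∈ V₀, H (Hinv q) = q) ∧
    H (0, 0) = (0, 0) ∧
    H '' (U₀ ∩ {p : ℝ × ℝ | p.2 = 0}) = V₀ ∩ {p : ℝ × ℝ | p.2 = 0} ∧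
    MapsOrbits X X' H (U₀ ∩ {p : ℝ × ℝ | 0 ≤ p.2}) (V₀ ∩ {p : ℝ × ℝ | 0 ≤ p.2}) ∧
    MapsOrbits Y Y' H (U₀ ∩ {p : ℝ × ℝ | p.2 ≤ 0}) (V₀ ∩ {p : ℝ × ℝ | p.2 ≤ 0}) ∧
    MapsOrbits X' X Hinv (V₀ ∩ {p : ℝ × ℝ | 0 ≤ p.2}) (U₀ ∩ {p : ℝ × ℝ | 0 ≤ p.2}) ∧
    MapsOrbits Y' Y Hinv (V₀ ∩ {p : ℝ × ℝ | p.2 ≤ 0}) (U₀ ∩ {p : ℝ × ℝ | p.2 ≤ 0})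

/-- The function `Γ(x,y) = (x²+y²)^{1/2} ⬝ (−(1/2) ln(x²+y²))^{−3/2}` for
`x²+y² ≠ 0`, and `Γ(0,0) = 0`. -/
noncomputable def GammaFn (p : ℝ × ℝ) : ℝ :=
  if p.1 ^ 2 + p.2 ^ 2 = 0 then 0
  else (p.1 ^ 2 + p.2 ^ 2) ^ ((1 : ℝ) / 2) *
    (-(1 / 2) * Real.log (p.1 ^ 2 + p.2 ^ 2)) ^ (-(3 : ℝ) / 2)

/-!
Write `Γ(p) = |p| k(|p|²)` with `k(u) = (-½ log u)^(-3/2)`. Since `k(u) → 0` and `u k'(u) → 0`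
as `u → 0⁺`, `Γ` is `C¹` with vanishing derivative at the origin, so `Y*` and `Y*_L` have the same
linear part.

The node `Y*_L` has the orbit `t ↦ (eᵗ, t eᵗ)`, `t ≤ 0`, which lies in `{y ≤ 0}` and tends to the
origin in backward time; a Σ-equivalence would produce such an orbit of `Y*`. There is none. Near
the origin `(log |p|²)' ≤ 4` along `Y*`, so such an orbit lives for all negative times and
`-½ log |p|²` grows at most linearly in `-t`. The angle `φ = arctan (x / -y)` satisfies
`φ' = (x² + (x - y) Γ / 2) / |p|² ≥ 0` and `φ' ≥ φ²/4 - k(|p|²)`. If `φ` is ever negative, then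
`φ'` is bounded below by a positive constant in the past. Otherwise `x ≥ 0` and
`φ' ≥ φ²/4 + k(|p|²)/2 ≥ φ²/4 + A^(-3/2)/2` with `A` affine in `t`; comparing with `(2√A)⁻¹`
gives `φ ≥ (2√A)⁻¹`, hence `φ' ≥ 1/(16 A)`, which is not integrable at `-∞`. Either way
`φ → -∞`, contradicting `|φ| < π/2`.
-/

open Topology

namespace ZStar

lemma monotoneOn_sub_of_hasDerivAt_le {s : Set ℝ} (hs : s.OrdConnected) {f g f' g' : ℝ → ℝ}
    (hf : ∀ x ∈ s, HasDerivAt f (f' x) x) (hg : ∀ x ∈ s, HasDerivAt g (g' x) x)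
    (hle : ∀ x ∈ s, f' x ≤ g' x) : MonotoneOn (fun x => g x - f x) s :=
  monotoneOn_of_hasDerivWithinAt_nonneg hs.convex
    (fun x hx => ((hg x hx).sub (hf x hx)).continuousAt.continuousWithinAt)
    (fun x hx => ((hg x (interior_subset hx)).sub (hf x (interior_subset hx))).hasDerivWithinAt)
    (fun x hx => sub_nonneg.mpr (hle x (interior_subset hx)))

lemma tendsto_atBot_of_hasDerivAt_le {f g f' g' : ℝ → ℝ} {a : ℝ}
    (hf : ∀ x ≤ a, HasDerivAt f (f' x) x) (hg : ∀ x ≤ a, HasDerivAt g (g' x) x)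
    (hle : ∀ x ≤ a, g' x ≤ f' x) (hg_lim : Tendsto g atBot atBot) : Tendsto f atBot atBot := by
  have hmono := monotoneOn_sub_of_hasDerivAt_le ordConnected_Iic hg hf hle
  refine tendsto_atBot_mono' atBot ?_ (tendsto_atBot_add_const_right _ (f a - g a) hg_lim)
  filter_upwards [eventually_le_atBot a] with x hx
  have := hmono (mem_Iic.mpr hx) (le_refl a) hx
  simp only at this
  linarith

lemma le_of_monotoneOn_sub {f q : ℝ → ℝ} {a : ℝ} (hmono : MonotoneOn (fun x => f x - q x) (Iic a))
    (hq : Tendsto q atBot (𝓝 0)) (hf : ∀ x ≤ a, 0 ≤ f x) {x : ℝ} (hx : x ≤ a) : q x ≤ f x := by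
  have hlim : (0 : ℝ) ≤ f x - q x := by
    refine le_of_tendsto (by simpa using hq.neg) ?_
    filter_upwards [eventually_le_atBot x] with s hs
    linarith [hmono (hs.trans hx) hx hs, hf s (hs.trans hx)]
  linarith

lemma sq_le_four_mul_sin_sq {θ : ℝ} (h : |θ| ≤ Real.pi / 2) : θ ^ 2 ≤ 4 * Real.sin θ ^ 2 := by
  have hsin := Real.mul_abs_le_abs_sin h
  have hπ : |θ| / 2 ≤ 2 / Real.pi * |θ| := by
    rw [div_mul_eq_mul_div, le_div_iff₀ Real.pi_pos]
    nlinarith [abs_nonneg θ, Real.pi_le_four]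
  nlinarith [sq_abs θ, sq_abs (Real.sin θ), abs_nonneg θ]

lemma hasDerivAt_inv_two_mul_sqrt {A : ℝ → ℝ} {t : ℝ} (hA : HasDerivAt A (-2) t) (hpos : 0 < A t) :
    HasDerivAt (fun s => (2 * √(A s))⁻¹) (1 / (2 * (A t * √(A t)))) t := by
  have hs := Real.sqrt_pos.mpr hpos
  refine (((hA.sqrt hpos.ne').const_mul 2).inv (by positivity)).congr_deriv ?_
  field_simp
  rw [Real.sq_sqrt hpos.le]

lemma hasDerivAt_fst_comp {δ : ℝ → ℝ × ℝ} {v : ℝ × ℝ} {s : ℝ} (h : HasDerivAt δ v s) :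
    HasDerivAt (fun t => (δ t).1) v.1 s :=
  (hasFDerivAt_fst (p := δ s)).comp_hasDerivAt s h

lemma hasDerivAt_snd_comp {δ : ℝ → ℝ × ℝ} {v : ℝ × ℝ} {s : ℝ} (h : HasDerivAt δ v s) :
    HasDerivAt (fun t => (δ t).2) v.2 s :=
  (hasFDerivAt_snd (p := δ s)).comp_hasDerivAt s h

def radSq (p : ℝ × ℝ) : ℝ := p.1 ^ 2 + p.2 ^ 2

lemma radSq_nonneg (p : ℝ × ℝ) : 0 ≤ radSq p := by unfold radSq; positivity

lemma radSq_eq_zero_iff {p : ℝ × ℝ} : radSq p = 0 ↔ p = 0 := by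
  refine ⟨fun h => ?_, fun h => by simp [h, radSq]⟩
  have h1 : p.1 = 0 := by unfold radSq at h; nlinarith [sq_nonneg p.1, sq_nonneg p.2]
  have h2 : p.2 = 0 := by unfold radSq at h; nlinarith [sq_nonneg p.1, sq_nonneg p.2]
  exact Prod.ext h1 h2

lemma radSq_pos_iff {p : ℝ × ℝ} : 0 < radSq p ↔ p ≠ 0 :=
  (radSq_nonneg p).lt_iff_ne'.trans (not_congr radSq_eq_zero_iff)

lemma radSq_pos {p : ℝ × ℝ} (hp : p ≠ 0) : 0 < radSq p := radSq_pos_iff.mpr hp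

lemma radSq_pos_of_snd_neg {p : ℝ × ℝ} (hy : p.2 < 0) : 0 < radSq p := by
  unfold radSq; nlinarith [sq_nonneg p.1]

lemma continuous_radSq : Continuous radSq := by unfold radSq; fun_prop

lemma abs_fst_le_sqrt_radSq (p : ℝ × ℝ) : |p.1| ≤ √(radSq p) :=
  Real.abs_le_sqrt (by unfold radSq; nlinarith [sq_nonneg p.2])

lemma abs_snd_le_sqrt_radSq (p : ℝ × ℝ) : |p.2| ≤ √(radSq p) :=
  Real.abs_le_sqrt (by unfold radSq; nlinarith [sq_nonneg p.1])

lemma sqrt_radSq_le_two_mul_norm (p : ℝ × ℝ) : √(radSq p) ≤ 2 * ‖p‖ := by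
  have h1 : |p.1| ≤ ‖p‖ := norm_fst_le p
  have h2 : |p.2| ≤ ‖p‖ := norm_snd_le p
  rw [Real.sqrt_le_left (by positivity)]
  unfold radSq
  nlinarith [sq_abs p.1, sq_abs p.2, abs_nonneg p.1, abs_nonneg p.2]

lemma tendsto_radSq_nhdsGE : Tendsto radSq (𝓝 0) (𝓝[≥] 0) :=
  tendsto_nhdsWithin_iff.mpr
    ⟨by simpa [radSq] using continuous_radSq.tendsto 0, .of_forall radSq_nonneg⟩

lemma tendsto_comp_radSq {h : ℝ → ℝ} (h0 : h 0 = 0) (hh : Tendsto h (𝓝[>] 0) (𝓝 0)) :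
    Tendsto (fun p => h (radSq p)) (𝓝 0) (𝓝 0) := by
  have : ContinuousWithinAt h (Ici 0) 0 :=
    continuousWithinAt_Ioi_iff_Ici.mp (by rwa [ContinuousWithinAt, h0])
  rw [ContinuousWithinAt, h0] at this
  exact this.comp tendsto_radSq_nhdsGE

def radSqDeriv (p : ℝ × ℝ) : ℝ × ℝ →L[ℝ] ℝ :=
  (2 * p.1) • ContinuousLinearMap.fst ℝ ℝ ℝ + (2 * p.2) • ContinuousLinearMap.snd ℝ ℝ ℝ

lemma hasFDerivAt_radSq (p : ℝ × ℝ) : HasFDerivAt radSq (radSqDeriv p) p := by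
  refine (((hasFDerivAt_fst (p := p)).pow 2).add ((hasFDerivAt_snd (p := p)).pow 2)).congr_fderiv ?_
  ext <;> simp [radSqDeriv]

lemma continuous_radSqDeriv : Continuous radSqDeriv := by unfold radSqDeriv; fun_prop

lemma norm_radSqDeriv_le (p : ℝ × ℝ) : ‖radSqDeriv p‖ ≤ 4 * √(radSq p) := by
  refine ContinuousLinearMap.opNorm_le_bound _ (by positivity) fun v => ?_
  have hv1 : |v.1| ≤ ‖v‖ := norm_fst_le v
  have hv2 : |v.2| ≤ ‖v‖ := norm_snd_le v
  have hx := abs_fst_le_sqrt_radSq p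
  have hy := abs_snd_le_sqrt_radSq p
  have hDR : radSqDeriv p v = 2 * p.1 * v.1 + 2 * p.2 * v.2 := by simp [radSqDeriv, mul_assoc]
  rw [hDR, Real.norm_eq_abs]
  calc |2 * p.1 * v.1 + 2 * p.2 * v.2| ≤ 2 * |p.1| * |v.1| + 2 * |p.2| * |v.2| := by
        simpa [abs_mul] using abs_add_le (2 * p.1 * v.1) (2 * p.2 * v.2)
    _ ≤ 4 * √(radSq p) * ‖v‖ := by
        nlinarith [abs_nonneg p.1, abs_nonneg p.2, abs_nonneg v.1, abs_nonneg v.2]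

section SqrtRadSqMul

variable {k k' : ℝ → ℝ} {r : ℝ}

def sqrtRadSqMulFDeriv (k k' : ℝ → ℝ) (p : ℝ × ℝ) : ℝ × ℝ →L[ℝ] ℝ :=
  (1 / (2 * √(radSq p)) * k (radSq p) + √(radSq p) * k' (radSq p)) • radSqDeriv p

lemma sqrtRadSqMulFDeriv_zero : sqrtRadSqMulFDeriv k k' 0 = 0 := by
  simp [sqrtRadSqMulFDeriv, radSqDeriv]

lemma norm_sqrtRadSqMulFDeriv_le (p : ℝ × ℝ) :
    ‖sqrtRadSqMulFDeriv k k' p‖ ≤ 4 * |k (radSq p) / 2 + radSq p * k' (radSq p)| := by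
  rcases (radSq_nonneg p).eq_or_lt with h0 | hpos
  · simp [sqrtRadSqMulFDeriv, ← h0]
  have hs : 0 < √(radSq p) := Real.sqrt_pos.mpr hpos
  have hcoeff : √(radSq p) * (1 / (2 * √(radSq p)) * k (radSq p) + √(radSq p) * k' (radSq p))
      = k (radSq p) / 2 + radSq p * k' (radSq p) := by
    field_simp
    rw [Real.sq_sqrt hpos.le]
    ring
  rw [sqrtRadSqMulFDeriv, norm_smul, Real.norm_eq_abs, ← hcoeff, abs_mul, abs_of_pos hs]
  nlinarith [norm_radSqDeriv_le p, abs_nonneg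
    (1 / (2 * √(radSq p)) * k (radSq p) + √(radSq p) * k' (radSq p))]

lemma hasFDerivAt_sqrt_radSq_mul_zero (hk00 : k 0 = 0) (hk0 : Tendsto k (𝓝[>] 0) (𝓝 0)) :
    HasFDerivAt (fun p => √(radSq p) * k (radSq p)) (0 : ℝ × ℝ →L[ℝ] ℝ) 0 := by
  rw [hasFDerivAt_iff_isLittleO_nhds_zero, Asymptotics.isLittleO_iff]
  intro c hc
  have hsmall : ∀ᶠ p in 𝓝 (0 : ℝ × ℝ), |k (radSq p)| ≤ c / 2 :=
    (tendsto_comp_radSq hk00 hk0).abs.eventually_le_const (by simpa using half_pos hc)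
  filter_upwards [hsmall] with p hp
  have h0 : radSq 0 = 0 := by simp [radSq]
  simp only [zero_add, h0, Real.sqrt_zero, zero_mul, sub_zero,
    zero_apply, Real.norm_eq_abs, abs_mul, abs_of_nonneg (Real.sqrt_nonneg _)]
  nlinarith [sqrt_radSq_le_two_mul_norm p, abs_nonneg (k (radSq p)), Real.sqrt_nonneg (radSq p)]

lemma hasFDerivAt_sqrt_radSq_mul {p : ℝ × ℝ} (hp : 0 < radSq p)
    (hk : HasDerivAt k (k' (radSq p)) (radSq p)) :
    HasFDerivAt (fun p => √(radSq p) * k (radSq p)) (sqrtRadSqMulFDeriv k k' p) p :=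
  ((Real.hasDerivAt_sqrt hp.ne').mul hk).comp_hasFDerivAt p (hasFDerivAt_radSq p)

lemma continuousAt_sqrtRadSqMulFDeriv {p : ℝ × ℝ} (hp : 0 < radSq p)
    (hk : ContinuousAt k (radSq p)) (hk' : ContinuousAt k' (radSq p)) :
    ContinuousAt (sqrtRadSqMulFDeriv k k') p := by
  have hR : ContinuousAt radSq p := continuous_radSq.continuousAt
  have hs : ContinuousAt (fun q => √(radSq q)) p := hR.sqrt
  have hs0 : 2 * √(radSq p) ≠ 0 := by positivity
  exact (((continuousAt_const.div (continuousAt_const.mul hs) hs0).mul (hk.comp hR)).add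
    (hs.mul (hk'.comp hR))).smul continuous_radSqDeriv.continuousAt

lemma continuousAt_sqrtRadSqMulFDeriv_zero (hk00 : k 0 = 0) (hk0 : Tendsto k (𝓝[>] 0) (𝓝 0))
    (hk'0 : Tendsto (fun u => u * k' u) (𝓝[>] 0) (𝓝 0)) :
    ContinuousAt (sqrtRadSqMulFDeriv k k') 0 := by
  rw [ContinuousAt, sqrtRadSqMulFDeriv_zero]
  refine squeeze_zero_norm (norm_sqrtRadSqMulFDeriv_le) ?_
  have hlim : Tendsto (fun u => k u / 2 + u * k' u) (𝓝[>] 0) (𝓝 0) := by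
    simpa using (hk0.div_const 2).add hk'0
  simpa using ((tendsto_comp_radSq (by simp [hk00]) hlim).abs.const_mul 4)

theorem contDiffOn_sqrt_radSq_mul (hk00 : k 0 = 0) (hk : ∀ u ∈ Ioo 0 r, HasDerivAt k (k' u) u)
    (hk' : ContinuousOn k' (Ioo 0 r)) (hk0 : Tendsto k (𝓝[>] 0) (𝓝 0))
    (hk'0 : Tendsto (fun u => u * k' u) (𝓝[>] 0) (𝓝 0)) :
    ContDiffOn ℝ 1 (fun p => √(radSq p) * k (radSq p)) {p | radSq p < r} := by
  have hU : IsOpen {p : ℝ × ℝ | radSq p < r} := isOpen_lt continuous_radSq continuous_const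
  have hderiv : ∀ p ∈ {p : ℝ × ℝ | radSq p < r},
      HasFDerivAt (fun p => √(radSq p) * k (radSq p)) (sqrtRadSqMulFDeriv k k' p) p := by
    intro p hp
    rcases (radSq_nonneg p).eq_or_lt with h0 | hpos
    · obtain rfl := radSq_eq_zero_iff.mp h0.symm
      rw [sqrtRadSqMulFDeriv_zero]
      exact hasFDerivAt_sqrt_radSq_mul_zero hk00 hk0
    · exact hasFDerivAt_sqrt_radSq_mul hpos (hk _ ⟨hpos, hp⟩)
  have hcont : ContinuousOn (sqrtRadSqMulFDeriv k k') {p | radSq p < r} := by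
    refine continuousOn_of_forall_continuousAt fun p hp => ?_
    rcases (radSq_nonneg p).eq_or_lt with h0 | hpos
    · obtain rfl := radSq_eq_zero_iff.mp h0.symm
      exact continuousAt_sqrtRadSqMulFDeriv_zero hk00 hk0 hk'0
    · have hmem : Ioo 0 r ∈ 𝓝 (radSq p) := Ioo_mem_nhds hpos hp
      exact continuousAt_sqrtRadSqMulFDeriv hpos (hk _ ⟨hpos, hp⟩).continuousAt
        (hk'.continuousAt hmem)
  rw [show (1 : WithTop ℕ∞) = 0 + 1 from rfl, contDiffOn_succ_iff_fderiv_of_isOpen hU]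
  refine ⟨fun p hp => (hderiv p hp).differentiableAt.differentiableWithinAt, by simp, ?_⟩
  exact contDiffOn_zero.mpr (hcont.congr fun p hp => (hderiv p hp).fderiv)

end SqrtRadSqMul

lemma hasDerivAt_radSq_comp {δ : ℝ → ℝ × ℝ} {v : ℝ × ℝ} {s : ℝ} (h : HasDerivAt δ v s) :
    HasDerivAt (fun t => radSq (δ t)) (2 * ((δ s).1 * v.1 + (δ s).2 * v.2)) s := by
  refine ((hasFDerivAt_radSq (δ s)).comp_hasDerivAt s h).congr_deriv ?_
  simp [radSqDeriv]
  ring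

def angle (p : ℝ × ℝ) : ℝ := Real.arctan (p.1 / -p.2)

lemma hasDerivAt_angle_comp {δ : ℝ → ℝ × ℝ} {v : ℝ × ℝ} {s : ℝ} (h : HasDerivAt δ v s)
    (hy : (δ s).2 < 0) :
    HasDerivAt (fun t => angle (δ t)) (((δ s).1 * v.2 - (δ s).2 * v.1) / radSq (δ s)) s := by
  have hquot : HasDerivAt (fun t => (δ t).1 / -(δ t).2)
      ((v.1 * -(δ s).2 - (δ s).1 * -v.2) / (-(δ s).2) ^ 2) s :=
    (hasDerivAt_fst_comp h).div (hasDerivAt_snd_comp h).neg (neg_pos.mpr hy).ne'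
  refine ((Real.hasDerivAt_arctan _).comp s hquot).congr_deriv ?_
  have hy0 : (δ s).2 ≠ 0 := hy.ne
  have hR := (radSq_pos_of_snd_neg hy).ne'
  unfold radSq at hR ⊢
  field_simp
  ring

lemma sin_angle_sq {p : ℝ × ℝ} (hy : p.2 < 0) : Real.sin (angle p) ^ 2 = p.1 ^ 2 / radSq p := by
  have hy0 : p.2 ≠ 0 := hy.ne
  rw [angle, Real.sin_arctan, div_pow, Real.sq_sqrt (by positivity), radSq]
  field_simp
  ring

lemma angle_sq_div_four_le {p : ℝ × ℝ} (hy : p.2 < 0) : angle p ^ 2 / 4 ≤ p.1 ^ 2 / radSq p := by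
  have hθ : |angle p| ≤ Real.pi / 2 :=
    abs_le.mpr ⟨(Real.neg_pi_div_two_lt_arctan _).le, (Real.arctan_lt_pi_div_two _).le⟩
  rw [← sin_angle_sq hy]
  linarith [sq_le_four_mul_sin_sq hθ]

lemma fst_nonneg_of_angle_nonneg {p : ℝ × ℝ} (hy : p.2 < 0) (h : 0 ≤ angle p) : 0 ≤ p.1 := by
  have := mul_nonneg (Real.arctan_nonneg.mp h) (neg_nonneg.mpr hy.le)
  rwa [div_mul_cancel₀ _ (neg_ne_zero.mpr hy.ne)] at this

def negHalfLog (u : ℝ) : ℝ := -(1 / 2) * Real.log u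

def decay (u : ℝ) : ℝ := negHalfLog u ^ (-(3 : ℝ) / 2)

def decayDeriv (u : ℝ) : ℝ := 3 / 4 * negHalfLog u ^ (-(5 : ℝ) / 2) / u

lemma gammaFn_eq_sqrt_mul_decay (p : ℝ × ℝ) : GammaFn p = √(radSq p) * decay (radSq p) := by
  unfold GammaFn
  split_ifs with h
  · simp [radSq, h]
  · rw [Real.sqrt_eq_rpow]; rfl

-- By the conventions `log 0 = 0` and `0 ^ x = 0` for `x ≠ 0`.
lemma decay_zero : decay 0 = 0 := by
  simp [decay, negHalfLog, Real.zero_rpow (show -(3 : ℝ) / 2 ≠ 0 by norm_num)]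

lemma negHalfLog_pos {u : ℝ} (h0 : 0 < u) (h1 : u < 1) : 0 < negHalfLog u := by
  have := Real.log_neg h0 h1
  unfold negHalfLog; linarith

lemma decay_nonneg {u : ℝ} (h0 : 0 ≤ u) (h1 : u ≤ 1) : 0 ≤ decay u :=
  Real.rpow_nonneg (by unfold negHalfLog; nlinarith [Real.log_nonpos h0 h1]) _

lemma tendsto_negHalfLog : Tendsto negHalfLog (𝓝[>] 0) atTop :=
  (tendsto_const_mul_atTop_of_neg (by norm_num)).mpr Real.tendsto_log_nhdsGT_zero

lemma tendsto_negHalfLog_rpow_neg {e : ℝ} (he : 0 < e) :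
    Tendsto (fun u => negHalfLog u ^ (-e)) (𝓝[>] 0) (𝓝 0) :=
  (tendsto_rpow_neg_atTop he).comp tendsto_negHalfLog

lemma tendsto_decay : Tendsto decay (𝓝[>] 0) (𝓝 0) :=
  (tendsto_negHalfLog_rpow_neg (e := 3 / 2) (by norm_num)).congr fun u => by
    rw [decay, neg_div]

lemma tendsto_mul_decayDeriv : Tendsto (fun u => u * decayDeriv u) (𝓝[>] 0) (𝓝 0) := by
  have h := (tendsto_negHalfLog_rpow_neg (e := 5 / 2) (by norm_num)).const_mul (3 / 4)
  rw [mul_zero] at h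
  refine h.congr' (eventually_nhdsWithin_of_forall fun u (hu : 0 < u) => ?_)
  simp only [decayDeriv, neg_div]
  field_simp

lemma hasDerivAt_decay {u : ℝ} (hu : u ∈ Ioo 0 1) : HasDerivAt decay (decayDeriv u) u := by
  have hb := negHalfLog_pos hu.1 hu.2
  have h : HasDerivAt decay _ u := ((Real.hasDerivAt_log hu.1.ne').const_mul (-(1 / 2))).rpow_const
    (p := -(3 : ℝ) / 2) (Or.inl hb.ne')
  refine h.congr_deriv ?_
  rw [decayDeriv, negHalfLog, show -(3 : ℝ) / 2 - 1 = -(5 : ℝ) / 2 by norm_num]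
  field_simp
  ring

lemma continuousOn_decayDeriv : ContinuousOn decayDeriv (Ioo 0 1) := by
  refine continuousOn_of_forall_continuousAt fun u hu => ?_
  have hb : ContinuousAt negHalfLog u :=
    continuousAt_const.mul (Real.continuousAt_log hu.1.ne')
  exact (continuousAt_const.mul (hb.rpow_const (Or.inl (negHalfLog_pos hu.1 hu.2).ne'))).div
    continuousAt_id hu.1.ne'

lemma gammaFn_eq_comp : GammaFn = fun p => √(radSq p) * decay (radSq p) :=
  funext gammaFn_eq_sqrt_mul_decay

lemma contDiffOn_gammaFn : ContDiffOn ℝ 1 GammaFn {p : ℝ × ℝ | p.1 ^ 2 + p.2 ^ 2 < 1} := by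
  rw [gammaFn_eq_comp]
  exact contDiffOn_sqrt_radSq_mul decay_zero (fun u hu => hasDerivAt_decay hu)
    continuousOn_decayDeriv tendsto_decay tendsto_mul_decayDeriv

lemma hasFDerivAt_gammaFn_zero : HasFDerivAt GammaFn (0 : ℝ × ℝ →L[ℝ] ℝ) 0 := by
  rw [gammaFn_eq_comp]
  exact hasFDerivAt_sqrt_radSq_mul_zero decay_zero tendsto_decay

lemma decay_eq_one_div {u : ℝ} (h0 : 0 < u) (h1 : u < 1) :
    decay u = 1 / (negHalfLog u * √(negHalfLog u)) := by
  have hb := negHalfLog_pos h0 h1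
  rw [decay, neg_div, Real.rpow_neg hb.le, show (3 : ℝ) / 2 = 1 + 1 / 2 by norm_num,
    Real.rpow_add hb, Real.rpow_one, ← Real.sqrt_eq_rpow, one_div]

def ystar (p : ℝ × ℝ) : ℝ × ℝ := (p.1 + (1 / 2) * GammaFn p, p.1 + p.2 + (1 / 2) * GammaFn p)

def xstarCLM : ℝ × ℝ →L[ℝ] ℝ × ℝ :=
  (ContinuousLinearMap.snd ℝ ℝ ℝ).prod (ContinuousLinearMap.fst ℝ ℝ ℝ)

def ylinCLM : ℝ × ℝ →L[ℝ] ℝ × ℝ :=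
  (ContinuousLinearMap.fst ℝ ℝ ℝ).prod
    (ContinuousLinearMap.fst ℝ ℝ ℝ + ContinuousLinearMap.snd ℝ ℝ ℝ)

lemma fderiv_xstar : fderiv ℝ (fun p : ℝ × ℝ => (p.2, p.1)) (0, 0) = xstarCLM :=
  (hasFDerivAt_snd.prodMk hasFDerivAt_fst).fderiv

lemma fderiv_ylin : fderiv ℝ (fun p : ℝ × ℝ => ((p.1, p.1 + p.2) : ℝ × ℝ)) (0, 0) = ylinCLM :=
  (hasFDerivAt_fst.prodMk (hasFDerivAt_fst.add hasFDerivAt_snd)).fderiv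

lemma fderiv_ystar : fderiv ℝ ystar (0, 0) = ylinCLM := by
  rw [Prod.mk_zero_zero]
  have hΓ : HasFDerivAt (fun p : ℝ × ℝ => (1 / 2) * GammaFn p) (0 : ℝ × ℝ →L[ℝ] ℝ) 0 := by
    simpa using hasFDerivAt_gammaFn_zero.const_mul (1 / 2 : ℝ)
  refine ((hasFDerivAt_fst.add hΓ).prodMk
    ((hasFDerivAt_fst.add hasFDerivAt_snd).add hΓ)).fderiv.trans ?_
  ext <;> simp [ylinCLM]

lemma inOmega0_zstar :
    InOmega0 {p : ℝ × ℝ | p.1 ^ 2 + p.2 ^ 2 < 1} (fun p => (p.2, p.1)) ystar := by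
  have hdet : detJ (fun p : ℝ × ℝ => (p.2, p.1)) = -1 ∧ detJ ystar = 1 := by
    simp [detJ, jac11, jac12, jac21, jac22, fderiv_xstar, fderiv_ystar, xstarCLM, ylinCLM]
  have hjac : jac21 (fun p : ℝ × ℝ => (p.2, p.1)) = 1 ∧ jac21 ystar = 1 := by
    simp [jac21, fderiv_xstar, fderiv_ystar, xstarCLM, ylinCLM]
  refine ⟨isOpen_lt (by fun_prop) continuous_const, by norm_num, contDiff_snd.prodMk
    contDiff_fst |>.contDiffOn, ?_, rfl, by simp [ystar, GammaFn], by simp [hdet], by simp [hjac]⟩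
  exact (contDiffOn_fst.add (contDiffOn_const.mul contDiffOn_gammaFn)).prodMk
    ((contDiffOn_fst.add contDiffOn_snd).add (contDiffOn_const.mul contDiffOn_gammaFn))

def smallDisc : Set (ℝ × ℝ) := {p | radSq p < 1 ∧ decay (radSq p) ≤ 1 / 8}

lemma tendsto_decay_radSq : Tendsto (fun p => decay (radSq p)) (𝓝 0) (𝓝 0) :=
  tendsto_comp_radSq decay_zero tendsto_decay

lemma smallDisc_mem_nhds : smallDisc ∈ 𝓝 (0 : ℝ × ℝ) := by
  have hR : ∀ᶠ p in 𝓝 (0 : ℝ × ℝ), radSq p < 1 :=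
    continuous_radSq.continuousAt.eventually_lt continuousAt_const (by simp [radSq])
  exact hR.and (tendsto_decay_radSq.eventually_le_const (by norm_num))

def angularRate (p : ℝ × ℝ) : ℝ := (p.1 * (ystar p).2 - p.2 * (ystar p).1) / radSq p

lemma angularRate_eq (p : ℝ × ℝ) :
    angularRate p = (p.1 ^ 2 + (p.1 - p.2) * GammaFn p / 2) / radSq p := by
  simp only [angularRate, ystar]
  ring

section Estimates

variable {p : ℝ × ℝ} (hp : p ∈ smallDisc)
include hp

lemma inner_ystar_le : p.1 * (ystar p).1 + p.2 * (ystar p).2 ≤ 2 * radSq p := by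
  have hd0 := decay_nonneg (radSq_nonneg p) hp.1.le
  obtain ⟨hx1, hx2⟩ := abs_le.mp (abs_fst_le_sqrt_radSq p)
  obtain ⟨hy1, hy2⟩ := abs_le.mp (abs_snd_le_sqrt_radSq p)
  have hr := Real.sq_sqrt (radSq_nonneg p)
  have hr0 := Real.sqrt_nonneg (radSq p)
  have hΓ : (p.1 + p.2) * GammaFn p ≤ radSq p / 4 := by
    rw [gammaFn_eq_sqrt_mul_decay]
    nlinarith [mul_nonneg hr0 hd0, mul_le_mul_of_nonneg_left hp.2 hr0]
  simp only [ystar]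
  unfold radSq at hr hΓ ⊢
  nlinarith [sq_nonneg (p.1 - p.2)]

lemma gammaFn_nonneg : 0 ≤ GammaFn p := by
  rw [gammaFn_eq_sqrt_mul_decay]
  exact mul_nonneg (Real.sqrt_nonneg _) (decay_nonneg (radSq_nonneg p) hp.1.le)

lemma gammaFn_le : GammaFn p ≤ √(radSq p) / 8 := by
  rw [gammaFn_eq_sqrt_mul_decay]
  nlinarith [mul_le_mul_of_nonneg_left hp.2 (Real.sqrt_nonneg (radSq p))]

lemma angularRate_nonneg (hy : p.2 < 0) : 0 ≤ angularRate p := by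
  rw [angularRate_eq]
  refine div_nonneg ?_ (radSq_nonneg p)
  have hΓ0 := gammaFn_nonneg hp
  rcases le_or_gt p.2 p.1 with hxy | hxy
  · nlinarith [mul_nonneg (sub_nonneg.mpr hxy) hΓ0]
  · have hΓ := gammaFn_le hp
    have hr : √(radSq p) ≤ 2 * -p.1 := by
      rw [Real.sqrt_le_left (by linarith), radSq]
      nlinarith
    nlinarith [mul_nonneg (neg_nonneg.mpr hy.le) hΓ0]

lemma angle_sq_div_four_sub_decay_le (hy : p.2 < 0) :
    angle p ^ 2 / 4 - decay (radSq p) ≤ angularRate p := by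
  have hR := radSq_pos_of_snd_neg hy
  have hd0 := decay_nonneg (radSq_nonneg p) hp.1.le
  obtain ⟨hx1, hx2⟩ := abs_le.mp (abs_fst_le_sqrt_radSq p)
  obtain ⟨hy1, hy2⟩ := abs_le.mp (abs_snd_le_sqrt_radSq p)
  have hr := Real.sq_sqrt (radSq_nonneg p)
  have hr0 := Real.sqrt_nonneg (radSq p)
  have hnum : p.1 ^ 2 - radSq p * decay (radSq p) ≤ p.1 ^ 2 + (p.1 - p.2) * GammaFn p / 2 := by
    rw [gammaFn_eq_sqrt_mul_decay]
    nlinarith [mul_nonneg hr0 hd0, mul_nonneg (mul_nonneg hr0 hr0) hd0]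
  calc angle p ^ 2 / 4 - decay (radSq p) ≤ p.1 ^ 2 / radSq p - decay (radSq p) := by
        linarith [angle_sq_div_four_le hy]
    _ = (p.1 ^ 2 - radSq p * decay (radSq p)) / radSq p := by field_simp
    _ ≤ angularRate p := by
        rw [angularRate_eq]; exact div_le_div_of_nonneg_right hnum hR.le

lemma angle_sq_div_four_add_decay_le (hx : 0 ≤ p.1) (hy : p.2 < 0) :
    angle p ^ 2 / 4 + decay (radSq p) / 2 ≤ angularRate p := by
  have hR := radSq_pos_of_snd_neg hy
  have hd0 := decay_nonneg (radSq_nonneg p) hp.1.le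
  have hr := Real.sq_sqrt (radSq_nonneg p)
  have hr0 := Real.sqrt_nonneg (radSq p)
  have hxy : √(radSq p) ≤ p.1 - p.2 := by
    rw [Real.sqrt_le_left (by linarith), radSq]
    nlinarith [mul_nonneg hx (neg_nonneg.mpr hy.le)]
  have hnum : p.1 ^ 2 + radSq p * decay (radSq p) / 2 ≤
      p.1 ^ 2 + (p.1 - p.2) * GammaFn p / 2 := by
    rw [gammaFn_eq_sqrt_mul_decay]
    nlinarith [mul_le_mul_of_nonneg_right hxy (mul_nonneg hr0 hd0)]
  calc angle p ^ 2 / 4 + decay (radSq p) / 2 ≤ p.1 ^ 2 / radSq p + decay (radSq p) / 2 := by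
        linarith [angle_sq_div_four_le hy]
    _ = (p.1 ^ 2 + radSq p * decay (radSq p) / 2) / radSq p := by field_simp
    _ ≤ angularRate p := by
        rw [angularRate_eq]; exact div_le_div_of_nonneg_right hnum hR.le

end Estimates

section Orbit

variable {δ : ℝ → ℝ × ℝ}

lemma monotoneOn_log_radSq_orbit {S : Set ℝ} (hS : S.OrdConnected)
    (hsol : ∀ s ∈ S, HasDerivAt δ (ystar (δ s)) s) (hsmall : ∀ s ∈ S, δ s ∈ smallDisc)
    (hne : ∀ s ∈ S, δ s ≠ 0) : MonotoneOn (fun t => 4 * t - Real.log (radSq (δ t))) S := by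
  refine monotoneOn_sub_of_hasDerivAt_le hS
    (fun s hs => (hasDerivAt_radSq_comp (hsol s hs)).log (radSq_pos (hne s hs)).ne')
    (fun s _ => by simpa using (hasDerivAt_id s).const_mul (4 : ℝ)) fun s hs => ?_
  rw [div_le_iff₀ (radSq_pos (hne s hs))]
  linarith [inner_ystar_le (hsmall s hs)]

lemma Iic_subset_of_orbit {J : Set ℝ} (hJ : J.OrdConnected) {a : ℝ} (ha : a ∈ J)
    (hsol : ∀ s ∈ J, HasDerivAt δ (ystar (δ s)) s) (hsmall : ∀ s ∈ J, s ≤ a → δ s ∈ smallDisc)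
    (hne : ∀ s ∈ J, δ s ≠ 0) (hlim : ∀ ε > 0, ∃ s₀ ∈ J, ∀ s ∈ J, s ≤ s₀ → ‖δ s‖ < ε) :
    Iic a ⊆ J := by
  have hmono := monotoneOn_log_radSq_orbit (hJ.inter ordConnected_Iic) (fun s hs => hsol s hs.1)
    (fun s hs => hsmall s hs.1 hs.2) (fun s hs => hne s hs.1)
  suffices hunb : ∀ b, ∃ s ∈ J, s < b by
    intro z hz
    obtain ⟨s, hs, hsz⟩ := hunb z
    exact hJ.out hs ha ⟨hsz.le, hz⟩
  intro b
  by_contra! hb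
  -- `(log ∘ radSq ∘ δ)' ≤ 4`, so `radSq ∘ δ` stays away from `0` on `J ∩ Iic a ⊆ Icc b a`.
  set η := Real.exp (Real.log (radSq (δ a)) - 4 * (a - b))
  have hlow : ∀ s ∈ J, s ≤ a → η ≤ radSq (δ s) := by
    intro s hs hsa
    have := hmono ⟨hs, hsa⟩ ⟨ha, le_refl a⟩ hsa
    simp only at this
    rw [← Real.exp_log (radSq_pos (hne s hs))]
    exact Real.exp_le_exp.mpr (by linarith [hb s hs])
  obtain ⟨s₀, hs₀, hclose⟩ := hlim (√η / 2) (by positivity)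
  have hmin : min s₀ a ∈ J := by rcases min_choice s₀ a with h | h <;> rw [h] <;> assumption
  have h1 := hclose _ hmin (min_le_left _ _)
  have h2 := Real.sqrt_le_sqrt (hlow _ hmin (min_le_right _ _))
  linarith [sqrt_radSq_le_two_mul_norm (δ (min s₀ a))]

lemma tendsto_atBot_of_Iic_subset {J : Set ℝ} {a : ℝ} (hsub : Iic a ⊆ J)
    (hlim : ∀ ε > 0, ∃ s₀ ∈ J, ∀ s ∈ J, s ≤ s₀ → ‖δ s‖ < ε) : Tendsto δ atBot (𝓝 0) := by
  refine Metric.tendsto_nhds.mpr fun ε hε => ?_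
  obtain ⟨s₀, -, hs₀⟩ := hlim ε hε
  filter_upwards [eventually_le_atBot (min s₀ a)] with s hs
  rw [dist_zero_right]
  exact hs₀ s (hsub (hs.trans (min_le_right _ _))) (hs.trans (min_le_left _ _))

lemma snd_lt_zero_of_orbit {a : ℝ} (hsol : ∀ s ≤ a, HasDerivAt δ (ystar (δ s)) s)
    (hsmall : ∀ s ≤ a, δ s ∈ smallDisc) (hy : ∀ s ≤ a, (δ s).2 ≤ 0) (hne : ∀ s ≤ a, δ s ≠ 0)
    {s : ℝ} (hs : s < a) : (δ s).2 < 0 := by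
  refine (hy s hs.le).lt_of_ne fun h0 => ?_
  have hmax : IsLocalMax (fun t => (δ t).2) s := by
    filter_upwards [Iic_mem_nhds hs] with t ht
    rw [h0]
    exact hy t ht
  have hderiv := hmax.hasDerivAt_eq_zero (hasDerivAt_snd_comp (hsol s hs.le))
  simp only [ystar, h0, add_zero] at hderiv
  have hx : (δ s).1 ≠ 0 := fun hx => hne s hs.le (Prod.ext hx h0)
  have hΓ := gammaFn_le (hsmall s hs.le)
  have hΓ0 := gammaFn_nonneg (hsmall s hs.le)
  rw [radSq, h0, zero_pow two_ne_zero, add_zero, Real.sqrt_sq_eq_abs] at hΓ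
  -- `y' = x + Γ/2` vanishes, but `Γ ≤ |x|/8`.
  have habs : |(δ s).1| = GammaFn (δ s) / 2 := by
    rw [show (δ s).1 = -(GammaFn (δ s) / 2) by linarith, abs_neg, abs_of_nonneg (by linarith)]
  exact hx (abs_eq_zero.mp (by linarith [abs_nonneg (δ s).1]))

end Orbit

def logBound (δ : ℝ → ℝ × ℝ) (a t : ℝ) : ℝ := negHalfLog (radSq (δ a)) + 2 * (a - t)

lemma hasDerivAt_logBound (δ : ℝ → ℝ × ℝ) (a t : ℝ) : HasDerivAt (logBound δ a) (-2) t :=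
  ((((hasDerivAt_id t).const_sub a).const_mul (2 : ℝ)).const_add _).congr_deriv (by norm_num)

lemma tendsto_logBound (δ : ℝ → ℝ × ℝ) (a : ℝ) : Tendsto (logBound δ a) atBot atTop := by
  set L := negHalfLog (radSq (δ a))
  refine tendsto_atTop.mpr fun b => eventually_atBot.mpr ⟨a - |b - L|, fun t ht => ?_⟩
  simp only [logBound]
  linarith [le_abs_self (b - L), abs_nonneg (b - L)]

section Tail

variable {δ : ℝ → ℝ × ℝ} {a : ℝ} (hsol : ∀ s ≤ a, HasDerivAt δ (ystar (δ s)) s)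
  (hsmall : ∀ s ≤ a, δ s ∈ smallDisc) (hy : ∀ s ≤ a, (δ s).2 < 0)
include hsol hy

lemma hasDerivAt_angle_orbit {s : ℝ} (hs : s ≤ a) :
    HasDerivAt (fun t => angle (δ t)) (angularRate (δ s)) s :=
  hasDerivAt_angle_comp (hsol s hs) (hy s hs)

include hsmall

lemma monotoneOn_angle_orbit : MonotoneOn (fun t => angle (δ t)) (Iic a) := by
  simpa using monotoneOn_sub_of_hasDerivAt_le ordConnected_Iic
    (fun s _ => hasDerivAt_const s (0 : ℝ)) (fun s hs => hasDerivAt_angle_orbit hsol hy hs)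
    (fun s hs => angularRate_nonneg (hsmall s hs) (hy s hs))

lemma tendsto_angle_orbit_of_neg (hlim : Tendsto δ atBot (𝓝 0)) {s₀ : ℝ} (hs₀ : s₀ ≤ a)
    (hneg : angle (δ s₀) < 0) : Tendsto (fun t => angle (δ t)) atBot atBot := by
  set c := angle (δ s₀) ^ 2 / 8 with hc_def
  have hc : 0 < c := div_pos (by nlinarith) (by norm_num)
  obtain ⟨s₁, hs₁⟩ := eventually_atBot.mp
    ((tendsto_decay_radSq.comp hlim).eventually_le_const hc)
  have hb : min s₀ s₁ ≤ a := (min_le_left _ _).trans hs₀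
  refine tendsto_atBot_of_hasDerivAt_le (a := min s₀ s₁) (g := fun t => c * t)
    (fun s hs => hasDerivAt_angle_orbit hsol hy (hs.trans hb))
    (fun s _ => by simpa using (hasDerivAt_id s).const_mul c) (fun s hs => ?_)
    (tendsto_id.const_mul_atBot hc)
  have hsa : s ≤ s₀ := hs.trans (min_le_left _ _)
  have hmono := monotoneOn_angle_orbit hsol hsmall hy (hsa.trans hs₀) hs₀ hsa
  have hsq : angle (δ s₀) ^ 2 ≤ angle (δ s) ^ 2 := by nlinarith
  have := angle_sq_div_four_sub_decay_le (hsmall s (hsa.trans hs₀)) (hy s (hsa.trans hs₀))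
  have := hs₁ s (hs.trans (min_le_right _ _))
  simp only [Function.comp] at this
  linarith [hc_def]

lemma negHalfLog_radSq_orbit_le {t : ℝ} (ht : t ≤ a) :
    negHalfLog (radSq (δ t)) ≤ logBound δ a t := by
  have hne : ∀ s ∈ Iic a, δ s ≠ 0 := fun s hs => radSq_pos_iff.mp (radSq_pos_of_snd_neg (hy s hs))
  have := monotoneOn_log_radSq_orbit ordConnected_Iic hsol hsmall hne ht (le_refl a) ht
  simp only at this
  unfold logBound negHalfLog
  linarith

lemma logBound_pos {t : ℝ} (ht : t ≤ a) : 0 < logBound δ a t :=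
  (negHalfLog_pos (radSq_pos_of_snd_neg (hy _ ht)) (hsmall t ht).1).trans_le
    (negHalfLog_radSq_orbit_le hsol hsmall hy ht)

lemma one_div_le_decay_orbit {t : ℝ} (ht : t ≤ a) :
    1 / (logBound δ a t * √(logBound δ a t)) ≤ decay (radSq (δ t)) := by
  have hR := radSq_pos_of_snd_neg (hy _ ht)
  have hb := negHalfLog_pos hR (hsmall t ht).1
  have hle := negHalfLog_radSq_orbit_le hsol hsmall hy ht
  rw [decay_eq_one_div hR (hsmall t ht).1]
  exact one_div_le_one_div_of_le (by positivity)
    (mul_le_mul hle (Real.sqrt_le_sqrt hle) (Real.sqrt_nonneg _)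
      (logBound_pos hsol hsmall hy ht).le)

-- For `A = logBound δ a`, the barrier `(2 √A)⁻¹` has derivative `A^(-3/2) / 2 ≤ decay / 2`, which
-- `angle ∘ δ` dominates; the barrier tends to `0` at `-∞` while `angle ∘ δ ≥ 0`.
lemma inv_le_angle_orbit (hnn : ∀ s ≤ a, 0 ≤ angle (δ s)) {t : ℝ} (ht : t ≤ a) :
    (2 * √(logBound δ a t))⁻¹ ≤ angle (δ t) := by
  have hq : ∀ s ≤ a, HasDerivAt (fun s => (2 * √(logBound δ a s))⁻¹)
      (1 / (2 * (logBound δ a s * √(logBound δ a s)))) s := fun s hs =>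
    hasDerivAt_inv_two_mul_sqrt (hasDerivAt_logBound δ a s) (logBound_pos hsol hsmall hy hs)
  have hq0 : Tendsto (fun s => (2 * √(logBound δ a s))⁻¹) atBot (𝓝 0) :=
    ((Real.tendsto_sqrt_atTop.comp (tendsto_logBound δ a)).const_mul_atTop
      two_pos).inv_tendsto_atTop
  refine le_of_monotoneOn_sub (monotoneOn_sub_of_hasDerivAt_le ordConnected_Iic hq
    (fun s hs => hasDerivAt_angle_orbit hsol hy hs) fun s hs => ?_) hq0 hnn ht
  have hx := fst_nonneg_of_angle_nonneg (hy s hs) (hnn s hs)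
  have hhalf : 1 / (2 * (logBound δ a s * √(logBound δ a s))) =
      1 / (logBound δ a s * √(logBound δ a s)) / 2 := by field_simp
  linarith [angle_sq_div_four_add_decay_le (hsmall s hs) hx (hy s hs),
    one_div_le_decay_orbit hsol hsmall hy hs, sq_nonneg (angle (δ s))]

lemma tendsto_angle_orbit_of_nonneg (hnn : ∀ s ≤ a, 0 ≤ angle (δ s)) :
    Tendsto (fun t => angle (δ t)) atBot atBot := by
  have hlog : ∀ t ≤ a, HasDerivAt (fun t => -(1 / 32) * Real.log (logBound δ a t))
      (1 / (16 * logBound δ a t)) t := fun t ht => by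
    have hA := (logBound_pos hsol hsmall hy ht).ne'
    refine (((hasDerivAt_logBound δ a t).log hA).const_mul _).congr_deriv ?_
    field_simp
    ring
  refine tendsto_atBot_of_hasDerivAt_le (fun s hs => hasDerivAt_angle_orbit hsol hy hs) hlog
    (fun t ht => ?_)
    ((Real.tendsto_log_atTop.comp (tendsto_logBound δ a)).const_mul_atTop_of_neg (by norm_num))
  have hA := logBound_pos hsol hsmall hy ht
  have hsq : (2 * √(logBound δ a t))⁻¹ ^ 2 = 1 / (4 * logBound δ a t) := by
    rw [inv_pow, mul_pow, Real.sq_sqrt hA.le, one_div]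
    ring
  have hφ := pow_le_pow_left₀ (by positivity) (inv_le_angle_orbit hsol hsmall hy hnn ht) 2
  have hx := fst_nonneg_of_angle_nonneg (hy t ht) (hnn t ht)
  have := angle_sq_div_four_add_decay_le (hsmall t ht) hx (hy t ht)
  have := decay_nonneg (radSq_nonneg (δ t)) (hsmall t ht).1.le
  have h16 : 1 / (16 * logBound δ a t) = 1 / (4 * logBound δ a t) / 4 := by field_simp; ring
  linarith

end Tail

lemma false_of_orbit_tendsto_zero {δ : ℝ → ℝ × ℝ} {a : ℝ}
    (hsol : ∀ s ≤ a, HasDerivAt δ (ystar (δ s)) s) (hsmall : ∀ s ≤ a, δ s ∈ smallDisc)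
    (hy : ∀ s ≤ a, (δ s).2 < 0) (hlim : Tendsto δ atBot (𝓝 0)) : False := by
  have hφ : Tendsto (fun t => angle (δ t)) atBot atBot := by
    by_cases h : ∃ s₀ ≤ a, angle (δ s₀) < 0
    · obtain ⟨s₀, hs₀, hneg⟩ := h
      exact tendsto_angle_orbit_of_neg hsol hsmall hy hlim hs₀ hneg
    · push Not at h
      exact tendsto_angle_orbit_of_nonneg hsol hsmall hy h
  obtain ⟨s, hs⟩ := (hφ.eventually (eventually_le_atBot (-(Real.pi / 2)))).exists
  exact (Real.neg_pi_div_two_lt_arctan _).not_ge hs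

theorem not_tendsto_zero_of_isSolutionOn_ystar {δ : ℝ → ℝ × ℝ} {J : Set ℝ} (hJ : J.OrdConnected)
    (hsol : IsSolutionOn ystar δ J) (hy : ∀ s ∈ J, (δ s).2 ≤ 0) (hne : ∀ s ∈ J, δ s ≠ 0) :
    ¬ ∀ ε > 0, ∃ s₀ ∈ J, ∀ s ∈ J, s ≤ s₀ → ‖δ s‖ < ε := by
  intro hlim
  obtain ⟨ε, hε, hball⟩ := Metric.mem_nhds_iff.mp smallDisc_mem_nhds
  obtain ⟨a, ha, hclose⟩ := hlim ε hε
  have hsmall : ∀ s ∈ J, s ≤ a → δ s ∈ smallDisc := fun s hs hsa =>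
    hball (by simpa using hclose s hs hsa)
  have hsub := Iic_subset_of_orbit hJ ha hsol hsmall hne hlim
  refine false_of_orbit_tendsto_zero (a := a - 1)
    (fun s hs => hsol s (hsub (show s ≤ a by linarith)))
    (fun s hs => hsmall s (hsub (show s ≤ a by linarith)) (by linarith)) (fun s hs => ?_)
    (tendsto_atBot_of_Iic_subset hsub hlim)
  exact snd_lt_zero_of_orbit (a := a) (fun s hs => hsol s (hsub hs))
    (fun s hs => hsmall s (hsub hs) hs) (fun s hs => hy s (hsub hs))
    (fun s hs => hne s (hsub hs)) (by linarith)

def nodeOrbit (t : ℝ) : ℝ × ℝ := (Real.exp t, t * Real.exp t)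

lemma hasDerivAt_nodeOrbit (t : ℝ) :
    HasDerivAt nodeOrbit ((nodeOrbit t).1, (nodeOrbit t).1 + (nodeOrbit t).2) t :=
  (Real.hasDerivAt_exp t).prodMk
    (((hasDerivAt_id t).mul (Real.hasDerivAt_exp t)).congr_deriv (by simp [nodeOrbit]))

lemma tendsto_nodeOrbit : Tendsto nodeOrbit atBot (𝓝 0) := by
  have h := ((Real.tendsto_pow_mul_exp_neg_atTop_nhds_zero 1).comp tendsto_neg_atBot_atTop).neg
  rw [neg_zero] at h
  exact Real.tendsto_exp_atBot.prodMk_nhds (h.congr fun t => by simp)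

lemma exists_orbit_tendsto_zero_of_mapsOrbits {Y Y' Hinv : ℝ × ℝ → ℝ × ℝ} {S S' : Set (ℝ × ℝ)}
    (hmaps : MapsOrbits Y' Y Hinv S' S) {γ : ℝ → ℝ × ℝ} {b : ℝ}
    (hγ : IsSolutionOn Y' γ (Iic b)) (hγS : ∀ t ≤ b, γ t ∈ S') (hne : ∀ t ≤ b, Hinv (γ t) ≠ 0)
    (hlim : Tendsto (fun t => Hinv (γ t)) atBot (𝓝 0)) :
    ∃ (δ : ℝ → ℝ × ℝ) (J : Set ℝ), J.OrdConnected ∧ IsSolutionOn Y δ J ∧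
      (∀ s ∈ J, δ s ∈ S) ∧ (∀ s ∈ J, δ s ≠ 0) ∧
      ∀ ε > 0, ∃ s₀ ∈ J, ∀ s ∈ J, s ≤ s₀ → ‖δ s‖ < ε := by
  obtain ⟨δ, J, τ, hJ, hδ, hδS, hbij, hmono, -, hH⟩ := hmaps γ (Iic b) ordConnected_Iic hγ hγS
  refine ⟨δ, J, hJ, hδ, hδS, fun s hs => ?_, fun ε hε => ?_⟩
  · obtain ⟨t, ht, rfl⟩ := hbij.surjOn hs
    rw [← hH t ht]
    exact hne t ht
  · obtain ⟨t₀, ht₀⟩ := eventually_atBot.mp (Metric.tendsto_nhds.mp hlim ε hε)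
    have hmin : min t₀ b ∈ Iic b := mem_Iic.mpr (min_le_right _ _)
    refine ⟨τ (min t₀ b), hbij.mapsTo hmin, fun s hs hsle => ?_⟩
    obtain ⟨t, ht, rfl⟩ := hbij.surjOn hs
    have htt : t ≤ min t₀ b := (hmono.le_iff_le ht hmin).mp hsle
    rw [← hH t ht, ← dist_zero_right]
    exact ht₀ t (htt.trans (min_le_left _ _))

lemma not_localSigmaEquiv_zstar :
    ¬ LocalSigmaEquiv (fun p => (p.2, p.1)) ystar (fun p => (p.2, p.1))
      (fun p => (p.1, p.1 + p.2)) := by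
  rintro ⟨U₀, V₀, H, Hinv, hU₀, hV₀, -, hHinvc, -, hHinvH, hHHinv, hH0, -, -, -, -, hmaps⟩
  rw [Prod.mk_zero_zero] at hU₀ hV₀ hH0
  have hHinv0 : Hinv 0 = 0 := by simpa [hH0] using hHinvH 0 (mem_of_mem_nhds hU₀)
  have hlim : Tendsto (fun t => Hinv (nodeOrbit t)) atBot (𝓝 0) := by
    have := (hHinvc.continuousAt hV₀).tendsto.comp tendsto_nodeOrbit
    rwa [hHinv0] at this
  obtain ⟨b, hb⟩ := eventually_atBot.mp (tendsto_nodeOrbit.eventually hV₀)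
  have hne : ∀ t ≤ min b 0, Hinv (nodeOrbit t) ≠ 0 := fun t ht h0 => by
    have := hHHinv _ (hb t (ht.trans (min_le_left _ _)))
    rw [h0, hH0] at this
    exact Real.exp_ne_zero t (congrArg Prod.fst this).symm
  have hγS : ∀ t ≤ min b 0, nodeOrbit t ∈ V₀ ∩ {p | p.2 ≤ 0} := fun t ht =>
    ⟨hb t (ht.trans (min_le_left _ _)),
      mul_nonpos_of_nonpos_of_nonneg (ht.trans (min_le_right _ _)) (Real.exp_pos t).le⟩
  obtain ⟨δ, J, hJ, hδ, hδS, hδne, hδlim⟩ := exists_orbit_tendsto_zero_of_mapsOrbits hmaps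
    (fun t _ => hasDerivAt_nodeOrbit t) hγS hne hlim
  exact not_tendsto_zero_of_isSolutionOn_ystar hJ hδ (fun s hs => (hδS s hs).2) hδne hδlim

end ZStar

/-- The vector field `Z* = ((y, x), (x + Γ/2, x + y + Γ/2))` belongs to Ω₀, has the same
piecewise linear part as `Z*_L = ((y, x), (x, x + y))`, but is NOT locally Σ-equivalent
to `Z*_L` near the origin. -/
theorem stmt9 :
    InOmega0 {p : ℝ × ℝ | p.1 ^ 2 + p.2 ^ 2 < 1}
      (fun p : ℝ × ℝ => (p.2, p.1))
      (fun p : ℝ × ℝ =>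
        (p.1 + (1 / 2) * GammaFn p, p.1 + p.2 + (1 / 2) * GammaFn p)) ∧
    fderiv ℝ (fun p : ℝ × ℝ =>
        ((p.1 + (1 / 2) * GammaFn p, p.1 + p.2 + (1 / 2) * GammaFn p) : ℝ × ℝ)) (0, 0) =
      fderiv ℝ (fun p : ℝ × ℝ => ((p.1, p.1 + p.2) : ℝ × ℝ)) (0, 0) ∧
    ¬ LocalSigmaEquiv
      (fun p : ℝ × ℝ => (p.2, p.1))
      (fun p : ℝ × ℝ =>
        (p.1 + (1 / 2) * GammaFn p, p.1 + p.2 + (1 / 2) * GammaFn p))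
      (fun p : ℝ × ℝ => (p.2, p.1))
      (fun p : ℝ × ℝ => (p.1, p.1 + p.2)) :=
  ⟨ZStar.inOmega0_zstar, ZStar.fderiv_ystar.trans ZStar.fderiv_ylin.symm,
    ZStar.not_localSigmaEquiv_zstar⟩
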